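/- Let A be a commutative ring, I ⊆ A an ideal, N a finitely generated projective A-module, M a finitely generated A-module, and q : A^d → M an A-linear map such that the induced map q̄ : (A/I)^d → M/IM is surjective. If M is generated by d elements, then there exists an A-linear map ℓ : A^d → M with image contained in IM such that the combined map (q, ℓ) : A^{2d} → M is surjective. -/

import Mathlib

/-!
Lift each generator `g i` of `M` modulo `IM` to `q (x i)`. The errors `g i - q (x i)` lie in
`IM`, and sending the standard basis to them gives `ℓ`; every `g i = q (x i) + ℓ (eᵢ)` then lies
in the image of `(q, ℓ)`, which is therefore all of `M`.
-/

open Submodule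

theorem LinearMap.surjective_coprod_fintypeLinearCombination {R P M ι : Type*} [Fintype ι]
    [CommSemiring R] [AddCommMonoid P] [Module R P] [AddCommGroup M] [Module R M]
    (q : P →ₗ[R] M) {g v : ι → M} (hg : span R (Set.range g) = ⊤)
    (hv : ∀ i, g i - v i ∈ LinearMap.range q) :
    Function.Surjective (q.coprod (Fintype.linearCombination R v)) := by
  rw [← LinearMap.range_eq_top, LinearMap.range_coprod, Fintype.range_linearCombination,
    eq_top_iff, ← hg, span_le]
  rintro _ ⟨i, rfl⟩
  rw [SetLike.mem_coe, ← sub_add_cancel (g i) (v i)]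
  exact add_mem (mem_sup_left (hv i)) (mem_sup_right (subset_span ⟨i, rfl⟩))

theorem stmt_3 {A : Type*} [CommRing A] (I : Ideal A)
    {M : Type*} [AddCommGroup M] [Module A M]
    (d : ℕ) (q : (Fin d → A) →ₗ[A] M)
    (hq : ∀ m : M, ∃ x : Fin d → A, m - q x ∈ (I • ⊤ : Submodule A M))
    (g : Fin d → M) (hg : Submodule.span A (Set.range g) = ⊤) :
    ∃ ℓ : (Fin d → A) →ₗ[A] M,
      LinearMap.range ℓ ≤ (I • ⊤ : Submodule A M) ∧
      Function.Surjective (LinearMap.coprod q ℓ) := by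
  choose x hx using fun i => hq (g i)
  refine ⟨Fintype.linearCombination A fun i => g i - q (x i), ?_, ?_⟩
  · rw [Fintype.range_linearCombination, span_le]
    rintro _ ⟨i, rfl⟩
    exact hx i
  · exact q.surjective_coprod_fintypeLinearCombination hg fun i =>
      ⟨x i, (sub_sub_cancel _ _).symm⟩
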